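/- Let n ≥ 1 be an integer and let a, b ∈ ZMod n satisfy 2a ≠ 0 and 2b ≠ 0. Then there is no 4×4 real orthogonal matrix d with det d = −1 that commutes with W(a,b). (That is, the representation W(a,b) is chiral.) -/

import Mathlib

/-!
Let `W = diag(R_α, R_β)` with `sin α, sin β ≠ 0`. A matrix commuting with `W` is complex-linear
for the complex structure `diag(J, J)` or `diag(J, -J)`, where `J` is the quarter turn: if
`R_β ≠ R_α^{±1}` its off-diagonal blocks vanish and its diagonal blocks commute with `J`; if
`R_β = R_α` then `W = cos α + sin α • diag(J, J)`; and `R_β = R_α⁻¹` reduces to `R_β = R_α` by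
conjugating with the reflection `diag(1, 1, 1, -1)`. A complex-linear map of `ℂ²` has real
determinant `|det_ℂ|² ≥ 0`, so it is never `-1`.
-/

/-- The 2×2 rotation matrix through angle `2πa/n`, for `a : ZMod n`. -/
noncomputable def rotMat (n : ℕ) (a : ZMod n) : Matrix (Fin 2) (Fin 2) ℝ :=
  !![Real.cos (2 * Real.pi * a.val / n), -Real.sin (2 * Real.pi * a.val / n);
     Real.sin (2 * Real.pi * a.val / n),  Real.cos (2 * Real.pi * a.val / n)]

/-- The 4×4 block-diagonal matrix with blocks `rotMat n a` and `rotMat n b`. -/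
noncomputable def Wmat (n : ℕ) (a b : ZMod n) : Matrix (Fin 4) (Fin 4) ℝ :=
  Matrix.reindex finSumFinEquiv finSumFinEquiv
    (Matrix.fromBlocks (rotMat n a) 0 0 (rotMat n b))

open Matrix

theorem Commute.of_add_smul {K R : Type*} [Field K] [Ring R] [Algebra K R] {d x : R}
    {c s : K} (hs : s ≠ 0) (h : Commute d (algebraMap K R c + s • x)) : Commute d x := by
  have := (h.sub_right (Algebra.commutes c d).symm).smul_right s⁻¹
  simpa [inv_smul_smul₀ hs] using this

theorem Commute.conj_of_mul_self_eq_one {R : Type*} [Monoid R] {f a b : R} (hf : f * f = 1)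
    (h : Commute a (f * b * f)) : Commute (f * a * f) b :=
  calc f * a * f * b = f * (a * (f * b * f)) * f := by simp only [mul_assoc, hf, mul_one]
    _ = f * (f * b * f * a) * f := by rw [h.eq]
    _ = b * (f * a * f) := by simp only [← mul_assoc, hf, one_mul]

/-- The left side is the real form of the complex matrix `[[x + iy, p + iq], [r + it, z + iw]]`,
the right side the squared modulus of its complex determinant. -/
theorem det_realify (x y p q r t z w : ℝ) :
    det !![x, -y, p, -q; y, x, q, p; r, -t, z, -w; t, r, w, z] =
      (x * z - y * w - p * r + q * t) ^ 2 + (x * w + y * z - p * t - q * r) ^ 2 := by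
  rw [det_succ_row_zero]
  simp [Fin.sum_univ_succ, det_fin_three, submatrix_apply, Fin.succAbove]
  ring

def stdComplexStructure : Matrix (Fin 4) (Fin 4) ℝ :=
  !![0, -1, 0, 0; 1, 0, 0, 0; 0, 0, 0, -1; 0, 0, 1, 0]

def blockRot (c s c' s' : ℝ) : Matrix (Fin 4) (Fin 4) ℝ :=
  !![c, -s, 0, 0; s, c, 0, 0; 0, 0, c', -s'; 0, 0, s', c']

def reflectLast : Matrix (Fin 4) (Fin 4) ℝ := diagonal ![1, 1, 1, -1]

theorem det_nonneg_of_commute_stdComplexStructure {d : Matrix (Fin 4) (Fin 4) ℝ}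
    (h : Commute d stdComplexStructure) : 0 ≤ d.det := by
  have e : ∀ i j, (d * stdComplexStructure) i j = (stdComplexStructure * d) i j :=
    fun i j => congrFun₂ h.eq i j
  simp [Fin.forall_fin_succ, stdComplexStructure, mul_apply, Fin.sum_univ_four] at e
  have hd : d = !![d 0 0, -d 1 0, d 0 2, -d 1 2; d 1 0, d 0 0, d 1 2, d 0 2;
      d 2 0, -d 3 0, d 2 2, -d 3 2; d 3 0, d 2 0, d 3 2, d 2 2] := by
    ext i j
    fin_cases i <;> fin_cases j <;> simp <;> linarith
  rw [hd, det_realify]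
  positivity

theorem blockRot_self (c s : ℝ) :
    blockRot c s c s = algebraMap ℝ _ c + s • stdComplexStructure := by
  ext i j
  fin_cases i <;> fin_cases j <;> simp [blockRot, stdComplexStructure, algebraMap_eq_diagonal]

theorem reflectLast_mul_reflectLast : reflectLast * reflectLast = 1 := by
  rw [reflectLast, diagonal_mul_diagonal, ← diagonal_one]
  congr 1; ext i; fin_cases i <;> simp

theorem det_reflectLast : reflectLast.det = -1 := by
  simp [reflectLast, det_diagonal, Fin.prod_univ_four]

theorem reflectLast_mul_blockRot_mul_reflectLast (c s c' s' : ℝ) :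
    reflectLast * blockRot c s c' s' * reflectLast = blockRot c s c' (-s') := by
  ext i j; fin_cases i <;> fin_cases j <;> simp [reflectLast, blockRot]

theorem blockRot_transpose (c s c' s' : ℝ) :
    (blockRot c s c' s')ᵀ = blockRot c (-s) c' (-s') := by
  ext i j; fin_cases i <;> fin_cases j <;> simp [blockRot]

theorem blockRot_topRight_eq_zero {c s c' s' : ℝ} {d : Matrix (Fin 4) (Fin 4) ℝ}
    (hne : (c', s') ≠ (c, s)) (hne' : (c', s') ≠ (c, -s)) (h : Commute d (blockRot c s c' s')) :
    d 0 2 = 0 ∧ d 0 3 = 0 ∧ d 1 2 = 0 ∧ d 1 3 = 0 := by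
  have e : ∀ i j, (d * blockRot c s c' s') i j = (blockRot c s c' s' * d) i j :=
    fun i j => congrFun₂ h.eq i j
  simp [Fin.forall_fin_succ, blockRot, mul_apply, Fin.sum_univ_four] at e
  obtain ⟨⟨-, -, e02, e03⟩, ⟨-, -, e12, e13⟩, -⟩ := e
  have hΔ : (c' - c) * (c' - c) + (s' - s) * (s' - s) ≠ 0 := by
    rwa [Ne, mul_self_add_mul_self_eq_zero, sub_eq_zero, sub_eq_zero, ← Prod.mk.injEq]
  have hΔ' : (c' - c) * (c' - c) + (s' + s) * (s' + s) ≠ 0 := by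
    rwa [Ne, mul_self_add_mul_self_eq_zero, sub_eq_zero, add_eq_zero_iff_eq_neg, ← Prod.mk.injEq]
  -- `d 0 2 + d 1 3, d 1 2 - d 0 3` and `d 0 2 - d 1 3, d 0 3 + d 1 2` are the coordinates of the
  -- parts of the top-right block that commute and anticommute with the quarter turn.
  have p₁ : d 0 2 + d 1 3 = 0 := (mul_eq_zero_iff_left hΔ).1 <| by
    linear_combination (c' - c) * e02 + (c' - c) * e13 + (s' - s) * e12 - (s' - s) * e03
  have p₂ : d 1 2 - d 0 3 = 0 := (mul_eq_zero_iff_left hΔ).1 <| by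
    linear_combination (c' - c) * e12 - (c' - c) * e03 - (s' - s) * e02 - (s' - s) * e13
  have p₃ : d 0 2 - d 1 3 = 0 := (mul_eq_zero_iff_left hΔ').1 <| by
    linear_combination (c' - c) * e02 - (c' - c) * e13 - (s' + s) * e12 - (s' + s) * e03
  have p₄ : d 0 3 + d 1 2 = 0 := (mul_eq_zero_iff_left hΔ').1 <| by
    linear_combination (c' - c) * e12 + (c' - c) * e03 + (s' + s) * e02 - (s' + s) * e13
  refine ⟨?_, ?_, ?_, ?_⟩ <;> linarith

theorem commute_stdComplexStructure_of_commute_blockRot {c s c' s' : ℝ}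
    {d : Matrix (Fin 4) (Fin 4) ℝ} (hs : s ≠ 0) (hs' : s' ≠ 0) (hne : (c', s') ≠ (c, s))
    (hne' : (c', s') ≠ (c, -s))
    (h : Commute d (blockRot c s c' s')) : Commute d stdComplexStructure := by
  obtain ⟨h02, h03, h12, h13⟩ := blockRot_topRight_eq_zero hne hne' h
  have hT : Commute dᵀ (blockRot c (-s) c' (-s')) := by
    rw [← blockRot_transpose, Commute, SemiconjBy, ← transpose_mul, ← transpose_mul, h.eq]
  obtain ⟨h20, h30, h21, h31⟩ := blockRot_topRight_eq_zero (by simpa using hne)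
    (by simpa [neg_eq_iff_eq_neg] using hne') hT
  simp only [transpose_apply] at h20 h30 h21 h31
  have e : ∀ i j, (d * blockRot c s c' s') i j = (blockRot c s c' s' * d) i j :=
    fun i j => congrFun₂ h.eq i j
  simp [Fin.forall_fin_succ, blockRot, mul_apply, Fin.sum_univ_four] at e
  obtain ⟨⟨e00, e01, -⟩, -, ⟨-, -, e22, e23⟩, -⟩ := e
  have h01 : d 0 1 = -d 1 0 := by
    have := (mul_eq_zero_iff_left hs).1 (by linear_combination e00 : s * (d 0 1 + d 1 0) = 0)
    linarith
  have h11 : d 1 1 = d 0 0 := by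
    have := (mul_eq_zero_iff_left hs).1 (by linear_combination e01 : s * (d 1 1 - d 0 0) = 0)
    linarith
  have h23 : d 2 3 = -d 3 2 := by
    have := (mul_eq_zero_iff_left hs').1 (by linear_combination e22 : s' * (d 2 3 + d 3 2) = 0)
    linarith
  have h33 : d 3 3 = d 2 2 := by
    have := (mul_eq_zero_iff_left hs').1 (by linear_combination e23 : s' * (d 3 3 - d 2 2) = 0)
    linarith
  ext i j
  fin_cases i <;> fin_cases j <;>
    simp [stdComplexStructure, mul_apply, Fin.sum_univ_four] <;> linarith

theorem det_nonneg_of_commute_blockRot_self {c s : ℝ} {d : Matrix (Fin 4) (Fin 4) ℝ}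
    (hs : s ≠ 0) (h : Commute d (blockRot c s c s)) : 0 ≤ d.det := by
  rw [blockRot_self] at h
  exact det_nonneg_of_commute_stdComplexStructure (h.of_add_smul hs)

theorem det_nonneg_of_commute_blockRot {c s c' s' : ℝ} {d : Matrix (Fin 4) (Fin 4) ℝ}
    (hs : s ≠ 0) (hs' : s' ≠ 0) (h : Commute d (blockRot c s c' s')) : 0 ≤ d.det := by
  by_cases hsame : (c', s') = (c, s)
  · obtain ⟨rfl, rfl⟩ := Prod.mk.inj hsame
    exact det_nonneg_of_commute_blockRot_self hs h
  by_cases hinv : (c', s') = (c, -s)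
  · obtain ⟨rfl, rfl⟩ := Prod.mk.inj hinv
    rw [← reflectLast_mul_blockRot_mul_reflectLast] at h
    have := det_nonneg_of_commute_blockRot_self hs
      (h.conj_of_mul_self_eq_one reflectLast_mul_reflectLast)
    rwa [det_mul, det_mul, det_reflectLast, neg_one_mul, mul_neg_one, neg_neg] at this
  exact det_nonneg_of_commute_stdComplexStructure
    (commute_stdComplexStructure_of_commute_blockRot hs hs' hsame hinv h)

theorem Wmat_eq_blockRot (n : ℕ) (a b : ZMod n) :
    Wmat n a b =
      blockRot (Real.cos (2 * Real.pi * a.val / n)) (Real.sin (2 * Real.pi * a.val / n))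
        (Real.cos (2 * Real.pi * b.val / n)) (Real.sin (2 * Real.pi * b.val / n)) := by
  ext i j
  fin_cases i <;> fin_cases j <;> simp [Wmat, rotMat, blockRot, finSumFinEquiv] <;> rfl

theorem sin_two_pi_mul_val_div_ne_zero {n : ℕ} [NeZero n] {a : ZMod n} (ha : 2 * a ≠ 0) :
    Real.sin (2 * Real.pi * a.val / n) ≠ 0 := by
  rw [Ne, Real.sin_eq_zero_iff]
  rintro ⟨k, hk⟩
  have hkn : (k : ℝ) * n = 2 * a.val := by
    field_simp at hk
    rw [hk, div_mul_cancel₀ _ (Nat.cast_ne_zero.2 (NeZero.ne n))]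
  apply ha
  have : ((2 * a.val : ℤ) : ZMod n) = 2 * a := by push_cast; simp
  rw [← this, ZMod.intCast_zmod_eq_zero_iff_dvd]
  exact ⟨k, by exact_mod_cast hkn.symm.trans (mul_comm _ _)⟩

theorem stmt_12 (n : ℕ) (hn : 1 ≤ n) (a b : ZMod n)
    (ha : 2 * a ≠ 0) (hb : 2 * b ≠ 0) :
    ¬ ∃ d : Matrix (Fin 4) (Fin 4) ℝ, d ∈ Matrix.orthogonalGroup (Fin 4) ℝ ∧
        d.det = -1 ∧ d * Wmat n a b = Wmat n a b * d := by
  have : NeZero n := ⟨by omega⟩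
  rintro ⟨d, -, hdet, hcomm⟩
  have := det_nonneg_of_commute_blockRot (sin_two_pi_mul_val_div_ne_zero ha)
    (sin_two_pi_mul_val_div_ne_zero hb) (Wmat_eq_blockRot n a b ▸ hcomm)
  linarith
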